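/- Let λ be a limit ordinal and w a λ-biworld. If for every agent A the intersection A↑w ∩ Ā↑w is empty, then w is completed (i.e. w has at most one extension to a (λ+1)-biworld). -/

import Mathlib

open Ordinal

/-- Three truth values: true, false, unknown. -/
inductive TV : Type
  | t | f | u
deriving DecidableEq

namespace TV

/-- Inverse of a truth value. -/
def inv : TV → TV
  | t => f
  | f => t
  | u => u

/-- Binary greatest lower bound in the truth order f ≤ₜ u ≤ₜ t. -/
def tmin : TV → TV → TV
  | f, _ => f
  | _, f => f
  | u, _ => u
  | _, u => u
  | t, t => t

/-- Truth value of a proposition. -/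
noncomputable def ofProp (p : Prop) : TV := by
  classical
  exact if p then t else f

/-- Greatest lower bound of a set of truth values in the truth order f ≤ₜ u ≤ₜ t. -/
noncomputable def tglbSet (s : Set TV) : TV := by
  classical
  exact if f ∈ s then f else if u ∈ s then u else t

/-- Least upper bound of a (chain) set of truth values in the precision order
u ≤ₚ t, u ≤ₚ f. -/
noncomputable def plubSet (s : Set TV) : TV := by
  classical
  exact if t ∈ s then t else if f ∈ s then f else u

/-- Precision order on truth values: u below everything. -/
def ple (a b : TV) : Prop := a = u ∨ a = b

end TV

/-- Formulas of the language COEL. -/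
inductive Form (Agent Atom : Type) : Type
  | atom : Atom → Form Agent Atom
  | neg : Form Agent Atom → Form Agent Atom
  | and : Form Agent Atom → Form Agent Atom → Form Agent Atom
  | K : Agent → Form Agent Atom → Form Agent Atom
  | M : Agent → Form Agent Atom → Form Agent Atom
  | E : Set Agent → Form Agent Atom → Form Agent Atom
  | C : Set Agent → Form Agent Atom → Form Agent Atom

/-- Iterated `E_G` operator: `Eiter G 0 φ = φ`, `Eiter G (k+1) φ = E_G (Eiter G k φ)`. -/
def Form.Eiter {Agent Atom : Type} (G : Set Agent) : ℕ → Form Agent Atom → Form Agent Atom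
  | 0, φ => φ
  | k + 1, φ => .E G (Form.Eiter G k φ)

/-- Modal depth of a COEL formula. -/
noncomputable def Form.MD {Agent Atom : Type} : Form Agent Atom → Ordinal.{0}
  | .atom _ => 0
  | .neg φ => φ.MD
  | .and φ ψ => max φ.MD ψ.MD
  | .K _ φ => φ.MD + 1
  | .M _ φ => φ.MD + 1
  | .E _ φ => φ.MD + 1
  | .C _ φ => φ.MD + omega0

/-- A system of prebiworlds over agents `Agent` and propositional vocabulary `Atom`,
packaging the transfinite construction of μ-prebiworlds for all countable ordinals μ,
together with the recursive equations defining restriction. -/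
structure PrebSys (Agent Atom : Type) where
  /-- the collection of all prebiworlds (of all depths) -/
  W : Type 1
  /-- the depth of a prebiworld -/
  depth : W → Ordinal.{0}
  depth_countable : ∀ w, (depth w).card ≤ Cardinal.aleph0
  /-- the objective interpretation of a prebiworld -/
  obj : W → Set Atom
  /-- for a (μ+1)-prebiworld, the set A^w of μ-prebiworlds deemed (extendibly) possible -/
  poss : Agent → W → Set W
  /-- for a (μ+1)-prebiworld, the set Ā^w of μ-prebiworlds deemed (extendibly) impossible -/
  imposs : Agent → W → Set W
  /-- for a limit-depth prebiworld, its component (w)_α at α < depth w -/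
  comp : W → Ordinal.{0} → W
  /-- the restriction w|_α of w to depth α ≤ depth w -/
  restrict : W → Ordinal.{0} → W
  depth_poss : ∀ (A : Agent) (w v : W), v ∈ poss A w → depth w = depth v + 1
  depth_imposs : ∀ (A : Agent) (w v : W), v ∈ imposs A w → depth w = depth v + 1
  depth_comp : ∀ (w : W) (α : Ordinal.{0}), Order.IsSuccLimit (depth w) → α < depth w →
    depth (comp w α) = α
  comp_mono : ∀ (w : W) (α β : Ordinal.{0}), Order.IsSuccLimit (depth w) → α ≤ β → β < depth w →
    restrict (comp w β) α = comp w α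
  ext_zero : ∀ w w' : W, depth w = 0 → depth w' = 0 → obj w = obj w' → w = w'
  ext_succ : ∀ (w w' : W) (μ : Ordinal.{0}), depth w = μ + 1 → depth w' = μ + 1 →
    obj w = obj w' → (∀ A, poss A w = poss A w') → (∀ A, imposs A w = imposs A w') → w = w'
  ext_limit : ∀ w w' : W, Order.IsSuccLimit (depth w) → depth w' = depth w →
    (∀ α < depth w, comp w α = comp w' α) → w = w'
  depth_restrict : ∀ (w : W) (α : Ordinal.{0}), α ≤ depth w → depth (restrict w α) = α
  restrict_zero : ∀ w : W, obj (restrict w 0) = obj w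
  restrict_limit : ∀ (w : W) (α β : Ordinal.{0}), Order.IsSuccLimit α → α ≤ depth w → β < α →
    comp (restrict w α) β = restrict w β
  restrict_succ_limit : ∀ (w : W) (α : Ordinal.{0}), Order.IsSuccLimit (depth w) →
    α + 1 ≤ depth w → restrict w (α + 1) = comp w (α + 1)
  restrict_succ_obj : ∀ (w : W) (μ α : Ordinal.{0}), depth w = μ + 1 → α + 1 ≤ depth w →
    obj (restrict w (α + 1)) = obj w
  restrict_succ_poss : ∀ (w : W) (μ α : Ordinal.{0}) (A : Agent), depth w = μ + 1 →
    α + 1 ≤ depth w →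
    poss A (restrict w (α + 1)) = (fun v => restrict v α) '' poss A w
  restrict_succ_imposs : ∀ (w : W) (μ α : Ordinal.{0}) (A : Agent), depth w = μ + 1 →
    α + 1 ≤ depth w →
    imposs A (restrict w (α + 1)) = (fun v => restrict v α) '' imposs A w

/-- The precision order: v ≤ₚ w iff w restricted to the depth of v equals v. -/
def PrebSys.lep {Agent Atom : Type} (S : PrebSys Agent Atom) (v w : S.W) : Prop :=
  S.depth v ≤ S.depth w ∧ S.restrict w (S.depth v) = v

/-- A system of biworlds: prebiworlds together with the simultaneously
(transfinite-recursively) defined predicates `Biworld` and `Incompleted`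
and their defining clauses. -/
structure BiSys (Agent Atom : Type) extends PrebSys Agent Atom where
  Biworld : W → Prop
  Incompleted : W → Prop
  biworld_zero : ∀ w : W, depth w = 0 → Biworld w
  biworld_succ : ∀ (w : W) (μ : Ordinal.{0}), depth w = μ + 1 →
    (Biworld w ↔ ∀ A : Agent,
      poss A w ∪ imposs A w = {v | depth v = μ ∧ Biworld v} ∧
      ∀ v ∈ poss A w ∩ imposs A w, Incompleted v)
  biworld_limit : ∀ w : W, Order.IsSuccLimit (depth w) →
    (Biworld w ↔ ∀ α < depth w, Biworld (comp w α))
  incompleted_iff : ∀ w : W, Incompleted w ↔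
    ∃ v₁ v₂ : W, v₁ ≠ v₂ ∧ Biworld v₁ ∧ Biworld v₂ ∧
      depth v₁ = depth w + 1 ∧ depth v₂ = depth w + 1 ∧
      PrebSys.lep toPrebSys w v₁ ∧ PrebSys.lep toPrebSys w v₂

/-- A biworld is completed if it is not incompleted. -/
def BiSys.Completed {Agent Atom : Type} (S : BiSys Agent Atom) (w : S.W) : Prop :=
  ¬ S.Incompleted w

/-- For a limit-depth prebiworld w, the set A↑w. -/
def BiSys.upPoss {Agent Atom : Type} (S : BiSys Agent Atom) (A : Agent) (w : S.W) :
    Set S.W :=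
  {v | S.depth v = S.depth w ∧ ∀ α < S.depth w, S.comp v α ∈ S.poss A (S.comp w (α + 1))}

/-- For a limit-depth prebiworld w, the set Ā↑w. -/
def BiSys.upImposs {Agent Atom : Type} (S : BiSys Agent Atom) (A : Agent) (w : S.W) :
    Set S.W :=
  {v | S.depth v = S.depth w ∧ ∀ α < S.depth w, S.comp v α ∈ S.imposs A (S.comp w (α + 1))}

/-- A system of biworlds together with the three-valued valuation of COEL formulas
and its defining equations. -/
structure ValSys (Agent Atom : Type) extends BiSys Agent Atom where
  val : Form Agent Atom → W → TV
  val_atom : ∀ (P : Atom) (w : W), val (.atom P) w = TV.ofProp (P ∈ obj w)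
  val_neg : ∀ (φ : Form Agent Atom) (w : W), val (.neg φ) w = (val φ w).inv
  val_and : ∀ (φ ψ : Form Agent Atom) (w : W),
    val (.and φ ψ) w = (val φ w).tmin (val ψ w)
  val_K_zero : ∀ (A : Agent) (φ : Form Agent Atom) (w : W), depth w = 0 →
    val (.K A φ) w = TV.u
  val_K_succ : ∀ (A : Agent) (φ : Form Agent Atom) (w : W) (μ : Ordinal.{0}),
    depth w = μ + 1 → val (.K A φ) w = TV.tglbSet (val φ '' poss A w)
  val_K_limit : ∀ (A : Agent) (φ : Form Agent Atom) (w : W), Order.IsSuccLimit (depth w) →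
    val (.K A φ) w = TV.plubSet {x | ∃ α < depth w, x = val (.K A φ) (comp w α)}
  val_M_zero : ∀ (A : Agent) (φ : Form Agent Atom) (w : W), depth w = 0 →
    val (.M A φ) w = TV.u
  val_M_succ : ∀ (A : Agent) (φ : Form Agent Atom) (w : W) (μ : Ordinal.{0}),
    depth w = μ + 1 →
    val (.M A φ) w = TV.tglbSet ((fun v => (val φ v).inv) '' imposs A w)
  val_M_limit : ∀ (A : Agent) (φ : Form Agent Atom) (w : W), Order.IsSuccLimit (depth w) →
    val (.M A φ) w = TV.plubSet {x | ∃ α < depth w, x = val (.M A φ) (comp w α)}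
  val_E : ∀ (G : Set Agent) (φ : Form Agent Atom) (w : W),
    val (.E G φ) w = TV.tglbSet {x | ∃ A ∈ G, x = val (.K A φ) w}
  val_C : ∀ (G : Set Agent) (φ : Form Agent Atom) (w : W),
    val (.C G φ) w = TV.tglbSet {x | ∃ k : ℕ, 1 ≤ k ∧ x = val (Form.Eiter G k φ) w}

/-- A world: a completed (ω²+1)-biworld. -/
def ValSys.World {Agent Atom : Type} (S : ValSys Agent Atom) (w : S.W) : Prop :=
  S.Biworld w ∧ S.depth w = omega0 ^ 2 + 1 ∧ S.toBiSys.Completed w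

/-- Accessibility in the canonical Kripke structure K*: w R_A w' iff w'|_{ω²} ∈ A^w. -/
def ValSys.Racc {Agent Atom : Type} (S : ValSys Agent Atom) (A : Agent)
    (w w' : S.W) : Prop :=
  S.restrict w' (omega0 ^ 2) ∈ S.poss A w

/-- Two-valued Kripke valuation on the canonical Kripke structure K* of worlds. -/
def ValSys.kval {Agent Atom : Type} (S : ValSys Agent Atom) :
    Form Agent Atom → S.W → Prop
  | .atom P, w => P ∈ S.obj w
  | .neg φ, w => ¬ S.kval φ w
  | .and φ ψ, w => S.kval φ w ∧ S.kval ψ w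
  | .K A φ, w => ∀ w', S.World w' → S.Racc A w w' → S.kval φ w'
  | .M A φ, w => ∀ w', S.World w' → S.kval φ w' → S.Racc A w w'
  | .E G φ, w => ∀ A ∈ G, ∀ w', S.World w' → S.Racc A w w' → S.kval φ w'
  | .C G φ, w => ∀ w', Relation.TransGen (fun x y => S.World y ∧ ∃ A ∈ G, S.Racc A x y) w w' →
      S.kval φ w'

/-! Every A-possible world of a (λ+1)-extension of `w` lies in A↑w and every A-impossible one
in Ā↑w. When these are disjoint, two extensions `v₁ v₂` cannot disagree on how they split the
λ-biworlds, which both cover by `A^v ∪ Ā^v`; so they have the same `A^`, `Ā^`, and (through `w`)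
the same objective part, hence coincide. -/

theorem Set.eq_and_eq_of_union_eq_of_disjoint {α : Type*} {a b c d : Set α}
    (hunion : a ∪ b = c ∪ d) (had : Disjoint a d) (hcb : Disjoint c b) : a = c ∧ b = d := by
  simp only [Set.ext_iff, Set.mem_union, Set.disjoint_left] at *
  exact ⟨fun x => by grind, fun x => by grind⟩

namespace PrebSys

variable {Agent Atom : Type} (S : PrebSys Agent Atom)

theorem comp_eq_restrict_of_restrict_eq {w v : S.W} (hlim : Order.IsSuccLimit (S.depth w))
    (hle : S.depth w ≤ S.depth v) (hr : S.restrict v (S.depth w) = w) {β : Ordinal.{0}}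
    (hβ : β < S.depth w) : S.comp w β = S.restrict v β := by
  rw [← S.restrict_limit v _ β hlim hle hβ, hr]

theorem obj_eq_obj_comp_one_of_restrict_eq {w v : S.W} (hlim : Order.IsSuccLimit (S.depth w))
    (hv : S.depth v = S.depth w + 1) (hr : S.restrict v (S.depth w) = w) :
    S.obj v = S.obj (S.comp w 1) := by
  have h1 : (0 : Ordinal.{0}) + 1 < S.depth w := hlim.add_one_lt hlim.bot_lt
  rw [← zero_add 1, S.comp_eq_restrict_of_restrict_eq hlim (hv ▸ le_self_add) hr h1,
    S.restrict_succ_obj v _ 0 hv (hv ▸ (h1.trans_le le_self_add).le)]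

theorem comp_mem_of_mem_of_restrict_eq (R : S.W → Set S.W)
    (hR_depth : ∀ w v, v ∈ R w → S.depth w = S.depth v + 1)
    (hR_restrict : ∀ w μ α, S.depth w = μ + 1 → α + 1 ≤ S.depth w →
      R (S.restrict w (α + 1)) = (fun v => S.restrict v α) '' R w)
    {w v u : S.W} (hlim : Order.IsSuccLimit (S.depth w))
    (hv : S.depth v = S.depth w + 1) (hr : S.restrict v (S.depth w) = w) (hu : u ∈ R v) :
    S.depth u = S.depth w ∧ ∀ α < S.depth w, S.comp u α ∈ R (S.comp w (α + 1)) := by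
  have hud : S.depth u = S.depth w := Order.add_one_inj.1 ((hR_depth v u hu).symm.trans hv)
  have hulim : Order.IsSuccLimit (S.depth u) := hud ▸ hlim
  refine ⟨hud, fun α hα => ?_⟩
  have hα1 : α + 1 < S.depth w := hlim.add_one_lt hα
  have hα2 : α + 1 + 1 < S.depth w := hlim.add_one_lt hα1
  have hd2 : S.depth (S.comp w (α + 1 + 1)) = α + 1 + 1 := S.depth_comp w _ hlim hα2
  -- `restrict u α` is not known to be `comp u α`, so pass through depth `α + 2` instead
  have h2 : S.restrict u (α + 1) ∈ R (S.comp w (α + 1 + 1)) := by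
    rw [S.comp_eq_restrict_of_restrict_eq hlim (hv ▸ le_self_add) hr hα2,
      hR_restrict v _ (α + 1) hv (hv ▸ (hα2.trans_le le_self_add).le)]
    exact ⟨u, hu, rfl⟩
  rw [← S.comp_mono w (α + 1) (α + 1 + 1) hlim le_self_add hα2,
    hR_restrict _ _ α hd2 (le_self_add.trans hd2.ge)]
  refine ⟨S.restrict u (α + 1), h2, ?_⟩
  rw [S.restrict_succ_limit u α hulim (hud ▸ hα1.le)]
  exact S.comp_mono u α (α + 1) hulim le_self_add (hud ▸ hα1)

end PrebSys

namespace BiSys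

variable {Agent Atom : Type} (S : BiSys Agent Atom)

theorem poss_subset_upPoss {w v : S.W} (hlim : Order.IsSuccLimit (S.depth w))
    (hv : S.depth v = S.depth w + 1) (hr : S.restrict v (S.depth w) = w) (A : Agent) :
    S.poss A v ⊆ S.upPoss A w := fun _ hu =>
  S.comp_mem_of_mem_of_restrict_eq (S.poss A) (S.depth_poss A)
    (fun w μ α => S.restrict_succ_poss w μ α A) hlim hv hr hu

theorem imposs_subset_upImposs {w v : S.W} (hlim : Order.IsSuccLimit (S.depth w))
    (hv : S.depth v = S.depth w + 1) (hr : S.restrict v (S.depth w) = w) (A : Agent) :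
    S.imposs A v ⊆ S.upImposs A w := fun _ hu =>
  S.comp_mem_of_mem_of_restrict_eq (S.imposs A) (S.depth_imposs A)
    (fun w μ α => S.restrict_succ_imposs w μ α A) hlim hv hr hu

theorem disjoint_poss_imposs_of_up_inter_empty {w v v' : S.W} {A : Agent}
    (hlim : Order.IsSuccLimit (S.depth w))
    (hv : S.depth v = S.depth w + 1) (hr : S.restrict v (S.depth w) = w)
    (hv' : S.depth v' = S.depth w + 1) (hr' : S.restrict v' (S.depth w) = w)
    (h : S.upPoss A w ∩ S.upImposs A w = ∅) : Disjoint (S.poss A v) (S.imposs A v') :=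
  (Set.disjoint_iff_inter_eq_empty.2 h).mono (S.poss_subset_upPoss hlim hv hr A)
    (S.imposs_subset_upImposs hlim hv' hr' A)

theorem poss_union_imposs_eq {v v' : S.W} {μ : Ordinal.{0}} (hv : S.depth v = μ + 1)
    (hv' : S.depth v' = μ + 1) (hb : S.Biworld v) (hb' : S.Biworld v') (A : Agent) :
    S.poss A v ∪ S.imposs A v = S.poss A v' ∪ S.imposs A v' := by
  rw [((S.biworld_succ v μ hv).1 hb A).1, ((S.biworld_succ v' μ hv').1 hb' A).1]

end BiSys

theorem completed_of_up_inter_empty_general {Agent Atom : Type} (S : BiSys Agent Atom) (w : S.W)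
    (hlim : Order.IsSuccLimit (S.depth w))
    (h : ∀ A : Agent, S.upPoss A w ∩ S.upImposs A w = ∅) :
    S.Completed w := by
  intro hinc
  obtain ⟨v₁, v₂, hne, hb₁, hb₂, hd₁, hd₂, ⟨-, hr₁⟩, ⟨-, hr₂⟩⟩ := (S.incompleted_iff w).1 hinc
  have hsame : ∀ A, S.poss A v₁ = S.poss A v₂ ∧ S.imposs A v₁ = S.imposs A v₂ := fun A =>
    Set.eq_and_eq_of_union_eq_of_disjoint (S.poss_union_imposs_eq hd₁ hd₂ hb₁ hb₂ A)
      (S.disjoint_poss_imposs_of_up_inter_empty hlim hd₁ hr₁ hd₂ hr₂ (h A))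
      (S.disjoint_poss_imposs_of_up_inter_empty hlim hd₂ hr₂ hd₁ hr₁ (h A))
  have hobj : S.obj v₁ = S.obj v₂ := by
    rw [S.obj_eq_obj_comp_one_of_restrict_eq hlim hd₁ hr₁,
      S.obj_eq_obj_comp_one_of_restrict_eq hlim hd₂ hr₂]
  exact hne (S.ext_succ v₁ v₂ _ hd₁ hd₂ hobj (fun A => (hsame A).1) fun A => (hsame A).2)

/-- for a limit-depth biworld w, if A↑w ∩ Ā↑w = ∅ for every agent,
then w is completed. -/
theorem completed_of_up_inter_empty {Agent Atom : Type} (S : BiSys Agent Atom) (w : S.W)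
    (hlim : Order.IsSuccLimit (S.depth w)) (hb : S.Biworld w)
    (h : ∀ A : Agent, S.upPoss A w ∩ S.upImposs A w = ∅) :
    S.Completed w :=
  completed_of_up_inter_empty_general S w hlim h
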